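/- There exists a constant C_Γ > 0, depending only on the Schottky data, such that for all nonempty words 𝐚, 𝐛 ∈ W° with 𝐚 ⇝ 𝐛: C_Γ^{-1} |I_𝐚| · |I_𝐛| ≤ |I_{𝐚'𝐛}| ≤ C_Γ |I_𝐚| · |I_𝐛|. -/

import Mathlib

open MeasureTheory Set Real Pointwise

noncomputable section

abbrev SL2 := Matrix.SpecialLinearGroup (Fin 2) ℝ

/-- The Möbius transformation of `ℝ` associated to `g ∈ SL(2,ℝ)` (junk value at the pole). -/
def mobius (g : SL2) (x : ℝ) : ℝ :=
  (g 0 0 * x + g 0 1) / (g 1 0 * x + g 1 1)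

/-- The derivative `γ'(x) = (cx+d)⁻²` of the Möbius transformation. -/
def mobiusDeriv (g : SL2) (x : ℝ) : ℝ :=
  ((g 1 0 * x + g 1 1) ^ 2)⁻¹

/-- The derivative of the Möbius transformation in the ball model,
`|γ'(x)|_B = ((1+x²)/(1+γ(x)²)) γ'(x)`. -/
def mobiusDerivB (g : SL2) (x : ℝ) : ℝ :=
  ((1 + x ^ 2) / (1 + mobius g x ^ 2)) * mobiusDeriv g x

/-- The Möbius action of `SL(2,ℝ)` on `ℝ ∪ {∞}`. -/
def mobiusOP (g : SL2) (x : OnePoint ℝ) : OnePoint ℝ :=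
  Option.elim x
    (if g 1 0 = 0 then OnePoint.infty else ((g 0 0 / g 1 0 : ℝ) : OnePoint ℝ))
    (fun y => if g 1 0 * y + g 1 1 = 0 then OnePoint.infty
      else ((mobius g y : ℝ) : OnePoint ℝ))

/-- The pole `γ⁻¹(∞) = -d/c` of `γ = [[a,b],[c,d]]`. -/
def mobiusPole (g : SL2) : ℝ := -(g 1 1) / (g 1 0)

/-- The distortion factor `α(γ, [x₀,x₁]) = log((γ⁻¹(∞) − x₁)/(γ⁻¹(∞) − x₀))`,
with the convention `α = 0` when `γ⁻¹(∞) = ∞` (i.e. `c = 0`). -/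
def alphaDist (g : SL2) (x₀ x₁ : ℝ) : ℝ :=
  if g 1 0 = 0 then 0 else Real.log ((mobiusPole g - x₁) / (mobiusPole g - x₀))

/-- The letter `ā` paired with `a` in the alphabet `{1,…,2r}` (modelled by `Fin (2r)`). -/
def bar {r : ℕ} (a : Fin (2 * r)) : Fin (2 * r) :=
  if h : (a : ℕ) < r then ⟨(a : ℕ) + r, by omega⟩
  else ⟨(a : ℕ) - r, by have := a.isLt; omega⟩

/-- Schottky data: `2r` disjoint compact intervals `I_a = [ξ₀ a, ξ₁ a]` on the real line and
transformations `γ_a ∈ SL(2,ℝ)` with `γ_ā = γ_a⁻¹` such that `γ_a` maps the complement (in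
`ℝ ∪ {∞}`) of the interior of `I_ā` onto `I_a`. -/
structure SchottkyData (r : ℕ) where
  hr : 2 ≤ r
  ξ₀ : Fin (2 * r) → ℝ
  ξ₁ : Fin (2 * r) → ℝ
  hlt : ∀ a, ξ₀ a < ξ₁ a
  hdisj : ∀ a b, a ≠ b → Disjoint (Icc (ξ₀ a) (ξ₁ a)) (Icc (ξ₀ b) (ξ₁ b))
  γ : Fin (2 * r) → SL2
  hinv : ∀ a, γ (bar a) = (γ a)⁻¹
  hmap : ∀ a, mobiusOP (γ a) ''
      (univ \ ((fun t : ℝ => (t : OnePoint ℝ)) '' Ioo (ξ₀ (bar a)) (ξ₁ (bar a))))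
      = (fun t : ℝ => (t : OnePoint ℝ)) '' Icc (ξ₀ a) (ξ₁ a)

namespace SchottkyData

variable {r : ℕ}

/-- `l` is a word: no letter is followed by its bar. -/
def IsWord (_ : SchottkyData r) (l : List (Fin (2 * r))) : Prop :=
  l.Chain' fun p q => q ≠ bar p

/-- The group element `γ_𝐚 = γ_{a_1} ⋯ γ_{a_n}` of a word. -/
def wordγ (S : SchottkyData r) (l : List (Fin (2 * r))) : SL2 :=
  (l.map S.γ).prod

/-- The interval `I_𝐚 = γ_{𝐚'}(I_{a_n})` of a nonempty word (and `∅` for the empty word). -/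
def wordI (S : SchottkyData r) (l : List (Fin (2 * r))) : Set ℝ :=
  if h : l = [] then ∅
  else mobius (S.wordγ l.dropLast) '' Icc (S.ξ₀ (l.getLast h)) (S.ξ₁ (l.getLast h))

/-- The limit set `Λ_Γ = ⋂_n ⋃_{𝐚 ∈ W_n} I_𝐚`. -/
def limitSet (S : SchottkyData r) : Set ℝ :=
  ⋂ n : ℕ, ⋃ (l : List (Fin (2 * r))) (_ : S.IsWord l ∧ l.length = n + 1), S.wordI l

/-- `μ` is the (δ-conformal) Patterson–Sullivan measure: a Borel probability measure
supported on the limit set satisfying the equivariance property under the group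
generated by the Schottky transformations. -/
def IsPS (S : SchottkyData r) (δ : ℝ) (μ : Measure ℝ) : Prop :=
  IsProbabilityMeasure μ ∧ μ S.limitSetᶜ = 0 ∧
    ∀ g ∈ Subgroup.closure (Set.range S.γ), ∀ f : ℝ → ℝ, Measurable f →
      (∃ C, ∀ x, |f x| ≤ C) →
      ∫ x, f x ∂μ = ∫ x, f (mobius g x) * mobiusDerivB g x ^ δ ∂μ

/-- The partition `Z(τ) = {𝐚 ∈ W° : |I_𝐚| ≤ τ < |I_{𝐚'}|}` (with `|I_∅| = ∞`). -/
def Zpart (S : SchottkyData r) (τ : ℝ) : Set (List (Fin (2 * r))) :=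
  {l | S.IsWord l ∧ l ≠ [] ∧ (MeasureTheory.volume (S.wordI l)).toReal ≤ τ ∧
    (l.dropLast = [] ∨ τ < (MeasureTheory.volume (S.wordI l.dropLast)).toReal)}

end SchottkyData

/-- The length `|I|` of an interval `I ⊂ ℝ`. -/
def ivlen (I : Set ℝ) : ℝ := (MeasureTheory.volume I).toReal

/-- `𝐚 ⇝ 𝐛` : the last letter of `𝐚` equals the first letter of `𝐛`. -/
def chn {X : Type*} (l m : List X) : Prop :=
  ∃ (h1 : l ≠ []) (h2 : m ≠ []), l.getLast h1 = m.head h2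

/-- The center of an interval. -/
def ctr (I : Set ℝ) : ℝ := (sInf I + sSup I) / 2

end

/-!
Let `e` be the last letter of `𝐚` and `g = γ_{𝐚'}`, so `I_𝐚 = g(I_e)`. If `𝐚 ⇝ 𝐛`, then
`I_𝐛 = [u, v] ⊆ I_e` and `I_{𝐚'𝐛} = g(I_𝐛)`. A Möbius map with denominator `q(x) = cx + d` sends
`[x, y]` to an interval of length `(y - x) / (q(x) q(y))`, hence
`|I_{𝐚'𝐛}| |I_e| / (|I_𝐚| |I_𝐛|) = q(ξ₀ e) q(ξ₁ e) / (q(u) q(v))`.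
By ping-pong the pole `g⁻¹(∞)` of `g` lies in some `I_f` with `f ≠ e`, and `q(x) = c (x - g⁻¹(∞))`.
Distinct intervals are a positive distance apart, so `|q(x) / q(y)|` is bounded for `x, y ∈ I_e`
by a constant depending only on the finitely many intervals, not on the word `𝐚`.
-/

open Filter

lemma exists_dist_le_mul_dist_of_disjoint {α : Type*} [PseudoMetricSpace α] {s t : Set α}
    (hs : IsCompact s) (ht : IsClosed t) (hst : Disjoint s t) :
    ∃ K, ∀ x ∈ s, ∀ y ∈ s, ∀ p ∈ t, dist x p ≤ K * dist y p := by
  obtain ⟨r, hr, hlt⟩ := Metric.exists_pos_forall_lt_edist hs ht hst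
  refine ⟨Metric.diam s / r + 1, fun x hx y hy p hp => ?_⟩
  have hyp : (r : ℝ) ≤ dist y p := by
    have h := hlt y hy p hp
    rw [edist_nndist, ENNReal.coe_lt_coe] at h
    exact_mod_cast h.le
  have hxy : dist x y ≤ Metric.diam s / r * dist y p :=
    calc dist x y ≤ Metric.diam s := Metric.dist_le_diam_of_mem hs.isBounded hx hy
      _ = Metric.diam s / r * r := by field_simp
      _ ≤ Metric.diam s / r * dist y p := by gcongr
  linarith [dist_triangle x y p]

def mobiusDenom (g : SL2) (x : ℝ) : ℝ := g 1 0 * x + g 1 1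

lemma SL2.det_eq_one (g : SL2) : g 0 0 * g 1 1 - g 0 1 * g 1 0 = 1 := by
  have h := g.2
  rwa [Matrix.det_fin_two] at h

lemma SL2.mul_apply (g h : SL2) (i j : Fin 2) :
    (g * h) i j = g i 0 * h 0 j + g i 1 * h 1 j := by
  simp [Matrix.SpecialLinearGroup.coe_mul, Matrix.mul_apply, Fin.sum_univ_two]

lemma mobius_mul (g h : SL2) {x : ℝ} (hx : mobiusDenom h x ≠ 0) :
    mobius (g * h) x = mobius g (mobius h x) := by
  have hden : (g * h) 1 0 * x + (g * h) 1 1 = (g 1 0 * mobius h x + g 1 1) * mobiusDenom h x := by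
    simp only [mobius, mobiusDenom, SL2.mul_apply] at *
    field_simp
    ring
  have hnum : (g * h) 0 0 * x + (g * h) 0 1 = (g 0 0 * mobius h x + g 0 1) * mobiusDenom h x := by
    simp only [mobius, mobiusDenom, SL2.mul_apply] at *
    field_simp
    ring
  rw [mobius, hden, hnum, mul_div_mul_right _ _ hx]
  rfl

lemma mobiusOP_eq_smul (g : SL2) (x : OnePoint ℝ) :
    mobiusOP g x = Matrix.SpecialLinearGroup.toGL g • x := by
  cases x with
  | infty => rw [OnePoint.smul_infty_eq_ite]; rfl
  | coe y => rw [OnePoint.smul_some_eq_ite]; rfl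

lemma mobiusOP_one (x : OnePoint ℝ) : mobiusOP 1 x = x := by
  rw [mobiusOP_eq_smul, map_one, one_smul]

lemma mobiusOP_mul (g h : SL2) (x : OnePoint ℝ) :
    mobiusOP (g * h) x = mobiusOP g (mobiusOP h x) := by
  simp only [mobiusOP_eq_smul, map_mul, mul_smul]

lemma mobiusOP_coe_mem_image_coe_iff (g : SL2) (x : ℝ) (A : Set ℝ) :
    mobiusOP g x ∈ (fun t : ℝ => (t : OnePoint ℝ)) '' A ↔
      mobiusDenom g x ≠ 0 ∧ mobius g x ∈ A := by
  change (if g 1 0 * x + g 1 1 = 0 then OnePoint.infty else ((mobius g x : ℝ) : OnePoint ℝ)) ∈ _ ↔ _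
  split_ifs with h <;> simp [mobiusDenom, h]

lemma mobiusOP_inv_infty_mem_image_coe_iff (g : SL2) (A : Set ℝ) :
    mobiusOP g⁻¹ OnePoint.infty ∈ (fun t : ℝ => (t : OnePoint ℝ)) '' A ↔
      g 1 0 ≠ 0 ∧ mobiusPole g ∈ A := by
  have hinv : ∀ i j, g⁻¹ i j = Matrix.adjugate (g : Matrix (Fin 2) (Fin 2) ℝ) i j := fun _ _ =>
    congrFun (congrFun (Matrix.SpecialLinearGroup.coe_inv g) _) _
  unfold mobiusOP mobiusPole
  simp only [hinv, Matrix.adjugate_fin_two, Matrix.of_apply, Matrix.cons_val', Matrix.cons_val_zero,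
    Matrix.cons_val_one, Matrix.empty_val', Matrix.cons_val_fin_one, neg_eq_zero, Option.elim]
  split_ifs with h <;> simp [h, neg_div, div_neg]

lemma mobius_sub_mobius (g : SL2) {x y : ℝ} (hx : mobiusDenom g x ≠ 0)
    (hy : mobiusDenom g y ≠ 0) :
    mobius g y - mobius g x = (y - x) / (mobiusDenom g x * mobiusDenom g y) := by
  have hdet := SL2.det_eq_one g
  unfold mobius mobiusDenom at *
  rw [div_sub_div _ _ hy hx]
  congr 1
  · linear_combination (y - x) * hdet
  · ring

lemma mobiusDenom_mul_mobiusDenom_pos (g : SL2) {s : Set ℝ} (hs : s.OrdConnected)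
    (hq : ∀ x ∈ s, mobiusDenom g x ≠ 0) {x y : ℝ} (hx : x ∈ s) (hy : y ∈ s) :
    0 < mobiusDenom g x * mobiusDenom g y := by
  have hcont : ContinuousOn (mobiusDenom g) (uIcc x y) := by
    unfold mobiusDenom; fun_prop
  by_contra! hneg
  have hzero : (0 : ℝ) ∈ uIcc (mobiusDenom g x) (mobiusDenom g y) := by
    rcases le_total 0 (mobiusDenom g x) with h | h
    · exact mem_uIcc.2 (Or.inr ⟨nonpos_of_mul_nonpos_right hneg (h.lt_of_ne (hq x hx).symm), h⟩)
    · exact mem_uIcc.2 (Or.inl ⟨h, nonneg_of_mul_nonpos_right hneg (h.lt_of_ne (hq x hx))⟩)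
  obtain ⟨z, hz, hz0⟩ := intermediate_value_uIcc hcont hzero
  exact hq z (hs.uIcc_subset hx hy hz) hz0

lemma mobius_image_Icc (g : SL2) {a b : ℝ} (hab : a ≤ b)
    (hq : ∀ x ∈ Icc a b, mobiusDenom g x ≠ 0) :
    mobius g '' Icc a b = Icc (mobius g a) (mobius g b) := by
  have hmono : MonotoneOn (mobius g) (Icc a b) := fun x hx y hy hxy => by
    rw [← sub_nonneg, mobius_sub_mobius g (hq x hx) (hq y hy)]
    exact div_nonneg (sub_nonneg.2 hxy)
      (mobiusDenom_mul_mobiusDenom_pos g ordConnected_Icc hq hx hy).le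
  have hcont : ContinuousOn (mobius g) (Icc a b) := by
    unfold mobius; exact ContinuousOn.div (by fun_prop) (by fun_prop) hq
  exact hmono.image_Icc_subset.antisymm (intermediate_value_Icc hab hcont)

lemma ivlen_Icc {a b : ℝ} (hab : a ≤ b) : ivlen (Icc a b) = b - a := by
  rw [ivlen, Real.volume_Icc, ENNReal.toReal_ofReal (sub_nonneg.2 hab)]

lemma ivlen_mobius_image_Icc (g : SL2) {a b : ℝ} (hab : a ≤ b)
    (hq : ∀ x ∈ Icc a b, mobiusDenom g x ≠ 0) :
    ivlen (mobius g '' Icc a b) = (b - a) / (|mobiusDenom g a| * |mobiusDenom g b|) := by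
  have ha : a ∈ Icc a b := left_mem_Icc.2 hab
  have hb : b ∈ Icc a b := right_mem_Icc.2 hab
  have hpos := mobiusDenom_mul_mobiusDenom_pos g ordConnected_Icc hq ha hb
  have hsub := mobius_sub_mobius g (hq a ha) (hq b hb)
  have hle : mobius g a ≤ mobius g b :=
    sub_nonneg.1 (hsub ▸ div_nonneg (sub_nonneg.2 hab) hpos.le)
  rw [mobius_image_Icc g hab hq, ivlen_Icc hle, hsub, ← abs_mul, abs_of_pos hpos]

lemma ivlen_mobius_image_Icc_mul_le (g : SL2) {s : Set ℝ} {a b c d K : ℝ}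
    (hab : a ≤ b) (hcd : c ≤ d) (habs : Icc a b ⊆ s) (hcds : Icc c d ⊆ s)
    (hq : ∀ x ∈ s, mobiusDenom g x ≠ 0)
    (hK : ∀ x ∈ s, ∀ y ∈ s, |mobiusDenom g x| ≤ K * |mobiusDenom g y|) :
    ivlen (mobius g '' Icc a b) * (d - c) ≤ K ^ 2 * ivlen (mobius g '' Icc c d) * (b - a) := by
  have ha := habs (left_mem_Icc.2 hab)
  have hb := habs (right_mem_Icc.2 hab)
  have hc := hcds (left_mem_Icc.2 hcd)
  have hd := hcds (right_mem_Icc.2 hcd)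
  have hpos : ∀ x ∈ s, 0 < |mobiusDenom g x| := fun x hx => abs_pos.2 (hq x hx)
  have hdist : |mobiusDenom g c| * |mobiusDenom g d| ≤
      K ^ 2 * (|mobiusDenom g a| * |mobiusDenom g b|) :=
    calc |mobiusDenom g c| * |mobiusDenom g d|
        ≤ (K * |mobiusDenom g a|) * (K * |mobiusDenom g b|) :=
          mul_le_mul (hK c hc a ha) (hK d hd b hb) (hpos d hd).le
            ((abs_nonneg _).trans (hK c hc a ha))
      _ = K ^ 2 * (|mobiusDenom g a| * |mobiusDenom g b|) := by ring
  rw [ivlen_mobius_image_Icc g hab fun x hx => hq x (habs hx),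
    ivlen_mobius_image_Icc g hcd fun x hx => hq x (hcds hx)]
  have hab' := mul_pos (hpos a ha) (hpos b hb)
  have hcd' := mul_pos (hpos c hc) (hpos d hd)
  rw [div_mul_eq_mul_div, mul_div_assoc', div_mul_eq_mul_div, div_le_div_iff₀ hab' hcd']
  calc (b - a) * (d - c) * (|mobiusDenom g c| * |mobiusDenom g d|)
      ≤ (b - a) * (d - c) * (K ^ 2 * (|mobiusDenom g a| * |mobiusDenom g b|)) := by
        gcongr
    _ = K ^ 2 * (d - c) * (b - a) * (|mobiusDenom g a| * |mobiusDenom g b|) := by ring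

lemma mobiusDenom_eq_mul_sub_mobiusPole (g : SL2) (hc : g 1 0 ≠ 0) (x : ℝ) :
    mobiusDenom g x = g 1 0 * (x - mobiusPole g) := by
  unfold mobiusDenom mobiusPole
  field_simp
  ring

namespace SchottkyData

variable {r : ℕ} (S : SchottkyData r)

lemma val_bar (a : Fin (2 * r)) : (bar a : ℕ) = if (a : ℕ) < r then a + r else a - r := by
  unfold bar
  split_ifs <;> rfl

lemma bar_bar (a : Fin (2 * r)) : bar (bar a) = a := by
  ext
  rw [val_bar, val_bar]
  split_ifs <;> omega

variable {S} in
lemma IsWord.reverse_map_bar {l : List (Fin (2 * r))} (hl : S.IsWord l) :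
    S.IsWord (l.map bar).reverse := by
  rw [IsWord, List.Chain'] at hl ⊢
  rw [List.isChain_reverse, List.isChain_map]
  exact hl.imp fun a b hab => by rw [bar_bar]; exact hab.symm

variable {S} in
lemma IsWord.getLast_ne_bar_getLast_dropLast {l : List (Fin (2 * r))} (hw : S.IsWord l)
    (hl : l ≠ []) (hd : l.dropLast ≠ []) : l.getLast hl ≠ bar (l.dropLast.getLast hd) := by
  rw [IsWord, List.Chain', ← List.dropLast_append_getLast hl, List.isChain_append] at hw
  exact hw.2.2 _ (List.getLast?_eq_some_getLast hd) _ rfl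

lemma wordγ_cons (a : Fin (2 * r)) (l : List (Fin (2 * r))) :
    S.wordγ (a :: l) = S.γ a * S.wordγ l := by
  simp [wordγ]

lemma wordγ_reverse_map_bar (l : List (Fin (2 * r))) :
    S.wordγ (l.map bar).reverse = (S.wordγ l)⁻¹ := by
  unfold wordγ
  rw [List.prod_inv_reverse, List.map_reverse, List.map_map, List.map_map]
  exact congrArg _ (congrArg _ (List.map_congr_left fun a _ => S.hinv a))

lemma coe_notMem_image_Ioo {a b : Fin (2 * r)} (hab : a ≠ b) {y : ℝ}
    (hy : y ∈ Icc (S.ξ₀ a) (S.ξ₁ a)) :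
    (y : OnePoint ℝ) ∉ (fun t : ℝ => (t : OnePoint ℝ)) '' Ioo (S.ξ₀ b) (S.ξ₁ b) := by
  rintro ⟨z, hz, hzy⟩
  rw [OnePoint.coe_injective hzy] at hz
  exact Set.disjoint_left.1 (S.hdisj a b hab) hy (Ioo_subset_Icc_self hz)

lemma mobiusOP_γ_mem {a b : Fin (2 * r)} (hab : b ≠ bar a) {X : OnePoint ℝ}
    (hX : X ∈ (fun t : ℝ => (t : OnePoint ℝ)) '' Icc (S.ξ₀ b) (S.ξ₁ b)) :
    mobiusOP (S.γ a) X ∈ (fun t : ℝ => (t : OnePoint ℝ)) '' Icc (S.ξ₀ a) (S.ξ₁ a) := by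
  obtain ⟨y, hy, rfl⟩ := hX
  rw [← S.hmap a]
  exact mem_image_of_mem _ ⟨mem_univ _, S.coe_notMem_image_Ioo hab hy⟩

lemma mobiusOP_wordγ_dropLast_mem : ∀ {l : List (Fin (2 * r))} (_ : S.IsWord l) (hl : l ≠ [])
    {x : ℝ}, x ∈ Icc (S.ξ₀ (l.getLast hl)) (S.ξ₁ (l.getLast hl)) →
      mobiusOP (S.wordγ l.dropLast) x ∈
        (fun t : ℝ => (t : OnePoint ℝ)) '' Icc (S.ξ₀ (l.head hl)) (S.ξ₁ (l.head hl))
  | [a], _, _, x, hx => by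
    simpa [wordγ, mobiusOP_one] using mem_image_of_mem (fun t : ℝ => (t : OnePoint ℝ)) hx
  | a :: b :: t, hw, _, x, hx => by
    obtain ⟨hab, hwt⟩ := List.isChain_cons_cons.mp hw
    rw [List.dropLast_cons_cons, wordγ_cons, mobiusOP_mul]
    exact S.mobiusOP_γ_mem hab (mobiusOP_wordγ_dropLast_mem hwt (List.cons_ne_nil b t) hx)

lemma mobiusOP_wordγ_infty_mem : ∀ {l : List (Fin (2 * r))} (_ : S.IsWord l) (hl : l ≠ []),
    mobiusOP (S.wordγ l) OnePoint.infty ∈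
      (fun t : ℝ => (t : OnePoint ℝ)) '' Icc (S.ξ₀ (l.head hl)) (S.ξ₁ (l.head hl))
  | [a], _, _ => by
    rw [List.head_cons, ← S.hmap a, show S.wordγ [a] = S.γ a by simp [wordγ]]
    exact mem_image_of_mem _ ⟨mem_univ _, by simp⟩
  | a :: b :: t, hw, _ => by
    obtain ⟨hab, hwt⟩ := List.isChain_cons_cons.mp hw
    rw [wordγ_cons, mobiusOP_mul]
    exact S.mobiusOP_γ_mem hab (mobiusOP_wordγ_infty_mem hwt (List.cons_ne_nil b t))

lemma mapsTo_mobius_wordγ_dropLast {l : List (Fin (2 * r))} (hw : S.IsWord l) (hl : l ≠ [])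
    {x : ℝ} (hx : x ∈ Icc (S.ξ₀ (l.getLast hl)) (S.ξ₁ (l.getLast hl))) :
    mobiusDenom (S.wordγ l.dropLast) x ≠ 0 ∧
      mobius (S.wordγ l.dropLast) x ∈ Icc (S.ξ₀ (l.head hl)) (S.ξ₁ (l.head hl)) :=
  (mobiusOP_coe_mem_image_coe_iff _ _ _).1 (S.mobiusOP_wordγ_dropLast_mem hw hl hx)

lemma mobiusPole_wordγ_mem {w : List (Fin (2 * r))} (hw : S.IsWord w) (hne : w ≠ []) :
    S.wordγ w 1 0 ≠ 0 ∧
      mobiusPole (S.wordγ w) ∈ Icc (S.ξ₀ (bar (w.getLast hne))) (S.ξ₁ (bar (w.getLast hne))) := by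
  have hne' : (w.map bar).reverse ≠ [] := by simpa using hne
  have h := S.mobiusOP_wordγ_infty_mem (hw.reverse_map_bar) hne'
  rwa [S.wordγ_reverse_map_bar, List.head_reverse, List.getLast_map,
    mobiusOP_inv_infty_mem_image_coe_iff] at h

lemma eventually_abs_sub_le (e : Fin (2 * r)) :
    ∀ᶠ K in atTop, ∀ f ≠ e, ∀ x ∈ Icc (S.ξ₀ e) (S.ξ₁ e), ∀ y ∈ Icc (S.ξ₀ e) (S.ξ₁ e),
      ∀ p ∈ Icc (S.ξ₀ f) (S.ξ₁ f), |x - p| ≤ K * |y - p| := by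
  refine eventually_all.2 fun f => ?_
  by_cases hfe : f = e
  · exact Eventually.of_forall fun _ h => absurd hfe h
  obtain ⟨K, hK⟩ := exists_dist_le_mul_dist_of_disjoint isCompact_Icc isClosed_Icc
    (S.hdisj e f (Ne.symm hfe))
  refine eventually_atTop.2 ⟨K, fun K' hK' _ x hx y hy p hp => ?_⟩
  simp only [← Real.dist_eq]
  exact (hK x hx y hy p hp).trans (mul_le_mul_of_nonneg_right hK' dist_nonneg)

lemma abs_mobiusDenom_wordγ_dropLast_le {l : List (Fin (2 * r))} (hw : S.IsWord l)
    (hl : l ≠ []) {K : ℝ} (hK1 : 1 ≤ K)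
    (hK : ∀ f ≠ l.getLast hl, ∀ x ∈ Icc (S.ξ₀ (l.getLast hl)) (S.ξ₁ (l.getLast hl)),
      ∀ y ∈ Icc (S.ξ₀ (l.getLast hl)) (S.ξ₁ (l.getLast hl)),
      ∀ p ∈ Icc (S.ξ₀ f) (S.ξ₁ f), |x - p| ≤ K * |y - p|)
    {x y : ℝ} (hx : x ∈ Icc (S.ξ₀ (l.getLast hl)) (S.ξ₁ (l.getLast hl)))
    (hy : y ∈ Icc (S.ξ₀ (l.getLast hl)) (S.ξ₁ (l.getLast hl))) :
    |mobiusDenom (S.wordγ l.dropLast) x| ≤ K * |mobiusDenom (S.wordγ l.dropLast) y| := by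
  by_cases hd : l.dropLast = []
  · simpa [hd, wordγ, mobiusDenom] using hK1
  obtain ⟨hc, hpole⟩ := S.mobiusPole_wordγ_mem (hw.prefix (List.dropLast_prefix l)) hd
  rw [mobiusDenom_eq_mul_sub_mobiusPole _ hc, mobiusDenom_eq_mul_sub_mobiusPole _ hc, abs_mul,
    abs_mul, mul_left_comm]
  exact mul_le_mul_of_nonneg_left
    (hK _ (hw.getLast_ne_bar_getLast_dropLast hl hd).symm x hx y hy _ hpole) (abs_nonneg _)

lemma wordI_of_ne_nil {l : List (Fin (2 * r))} (hl : l ≠ []) :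
    S.wordI l = mobius (S.wordγ l.dropLast) '' Icc (S.ξ₀ (l.getLast hl)) (S.ξ₁ (l.getLast hl)) :=
  dif_neg hl

lemma exists_wordI_eq_Icc {m : List (Fin (2 * r))} (hw : S.IsWord m) (hm : m ≠ []) :
    ∃ u v, u ≤ v ∧ S.wordI m = Icc u v ∧ Icc u v ⊆ Icc (S.ξ₀ (m.head hm)) (S.ξ₁ (m.head hm)) := by
  have hle := (S.hlt (m.getLast hm)).le
  have hmaps := fun x (hx : x ∈ Icc _ _) => S.mapsTo_mobius_wordγ_dropLast hw hm hx
  have himage := mobius_image_Icc (S.wordγ m.dropLast) hle fun x hx => (hmaps x hx).1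
  refine ⟨_, _, nonempty_Icc.1 (himage ▸ (nonempty_Icc.2 hle).image _),
    (S.wordI_of_ne_nil hm).trans himage, ?_⟩
  rw [← himage]
  rintro _ ⟨x, hx, rfl⟩
  exact (hmaps x hx).2

lemma wordI_dropLast_append {l m : List (Fin (2 * r))} (hwm : S.IsWord m) (hm : m ≠ []) :
    S.wordI (l.dropLast ++ m) = mobius (S.wordγ l.dropLast) '' S.wordI m := by
  have hlm : l.dropLast ++ m ≠ [] := by simp [hm]
  rw [S.wordI_of_ne_nil hlm, S.wordI_of_ne_nil hm, image_image,
    List.getLast_append_of_ne_nil hlm hm, List.dropLast_append_of_ne_nil hm, wordγ, List.map_append, List.prod_append]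
  exact image_congr fun x hx => mobius_mul _ _ (S.mapsTo_mobius_wordγ_dropLast hwm hm hx).1

lemma ivlen_wordI_dropLast_append_bounds {l m : List (Fin (2 * r))} (hwl : S.IsWord l)
    (hwm : S.IsWord m) (hl : l ≠ []) (hm : m ≠ []) (hlm : l.getLast hl = m.head hm) {K : ℝ}
    (hK : ∀ x ∈ Icc (S.ξ₀ (l.getLast hl)) (S.ξ₁ (l.getLast hl)),
      ∀ y ∈ Icc (S.ξ₀ (l.getLast hl)) (S.ξ₁ (l.getLast hl)),
      |mobiusDenom (S.wordγ l.dropLast) x| ≤ K * |mobiusDenom (S.wordγ l.dropLast) y|) :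
    ivlen (S.wordI l) * ivlen (S.wordI m) ≤
        K ^ 2 * ivlen (S.wordI (l.dropLast ++ m)) * (S.ξ₁ (l.getLast hl) - S.ξ₀ (l.getLast hl)) ∧
      ivlen (S.wordI (l.dropLast ++ m)) * (S.ξ₁ (l.getLast hl) - S.ξ₀ (l.getLast hl)) ≤
        K ^ 2 * ivlen (S.wordI l) * ivlen (S.wordI m) := by
  obtain ⟨u, v, huv, hIm, hsub⟩ := S.exists_wordI_eq_Icc hwm hm
  rw [← hlm] at hsub
  have hq := fun x (hx : x ∈ Icc _ _) => (S.mapsTo_mobius_wordγ_dropLast hwl hl hx).1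
  have hle := (S.hlt (l.getLast hl)).le
  rw [S.wordI_dropLast_append hwm hm, S.wordI_of_ne_nil hl, hIm, ivlen_Icc huv]
  exact ⟨ivlen_mobius_image_Icc_mul_le _ hle huv subset_rfl hsub hq hK,
    ivlen_mobius_image_Icc_mul_le _ huv hle hsub subset_rfl hq hK⟩

end SchottkyData

/-- **Concatenation:** there is `C_Γ > 0` depending only on the Schottky data such that
`C_Γ⁻¹|I_𝐚||I_𝐛| ≤ |I_{𝐚'𝐛}| ≤ C_Γ|I_𝐚||I_𝐛|` whenever `𝐚 ⇝ 𝐛` (the last letter of `𝐚`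
equals the first letter of `𝐛`). -/
theorem concatenation (r : ℕ) (S : SchottkyData r) :
    ∃ C > (0 : ℝ), ∀ (l m : List (Fin (2 * r))) (h1 : l ≠ []) (h2 : m ≠ []),
      S.IsWord l → S.IsWord m → l.getLast h1 = m.head h2 →
      C⁻¹ * (ivlen (S.wordI l) * ivlen (S.wordI m)) ≤ ivlen (S.wordI (l.dropLast ++ m)) ∧
      ivlen (S.wordI (l.dropLast ++ m)) ≤ C * (ivlen (S.wordI l) * ivlen (S.wordI m)) := by
  obtain ⟨K, hK1, hK⟩ :=
    ((eventually_ge_atTop 1).and (eventually_all.2 S.eventually_abs_sub_le)).exists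
  obtain ⟨C, hC0, hC⟩ := ((eventually_gt_atTop 0).and (eventually_all.2 fun e =>
    (eventually_ge_atTop (K ^ 2 * (S.ξ₁ e - S.ξ₀ e))).and
      (eventually_ge_atTop (K ^ 2 / (S.ξ₁ e - S.ξ₀ e))))).exists
  refine ⟨C, hC0, fun l m h1 h2 hwl hwm hlm => ?_⟩
  obtain ⟨hlower, hupper⟩ := S.ivlen_wordI_dropLast_append_bounds hwl hwm h1 h2 hlm
    fun x hx y hy => S.abs_mobiusDenom_wordγ_dropLast_le hwl h1 hK1 (hK _) hx hy
  set L := S.ξ₁ (l.getLast h1) - S.ξ₀ (l.getLast h1)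
  have hL : 0 < L := sub_pos.2 (S.hlt _)
  have hX : 0 ≤ ivlen (S.wordI (l.dropLast ++ m)) := ENNReal.toReal_nonneg
  have hAB : 0 ≤ ivlen (S.wordI l) * ivlen (S.wordI m) :=
    mul_nonneg ENNReal.toReal_nonneg ENNReal.toReal_nonneg
  constructor
  · rw [inv_mul_le_iff₀ hC0]
    calc ivlen (S.wordI l) * ivlen (S.wordI m)
        ≤ K ^ 2 * L * ivlen (S.wordI (l.dropLast ++ m)) := by linarith
      _ ≤ C * ivlen (S.wordI (l.dropLast ++ m)) := by gcongr; exact (hC _).1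
  · calc ivlen (S.wordI (l.dropLast ++ m))
        = ivlen (S.wordI (l.dropLast ++ m)) * L / L := (mul_div_cancel_right₀ _ hL.ne').symm
      _ ≤ K ^ 2 * ivlen (S.wordI l) * ivlen (S.wordI m) / L := by gcongr
      _ = K ^ 2 / L * (ivlen (S.wordI l) * ivlen (S.wordI m)) := by ring
      _ ≤ C * (ivlen (S.wordI l) * ivlen (S.wordI m)) := by gcongr; exact (hC _).2
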